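/- Let a ∈ (0,1] and let S ⊆ Lim(ω₁) be stationary. If ♣_S^{inf≥a} holds, then there exists a partition ⟨S_i : i < ω₁⟩ of S into pairwise disjoint stationary sets such that for every i < ω₁ the principle ♣_{S_i}^{inf≥a} holds. -/

import Mathlib

/-!
Call `B` guessed at `δ` when the ladder `α δ` hits `B` with lower density at least `a`. Densities
of pairwise disjoint sets add up to at most `1`, so fewer than `n = ⌊1/a⌋ + 1` pairwise disjoint
sets are guessed at any single point. Split `ω₁` into `ω₁` disjoint uncountable pieces `P i` and
choose greedily an uncountable `E i ⊆ P i` that is guessed at no point guessing an earlier `E k`.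
If this never gets stuck, the sets `T i` of points guessing `E i` are pairwise disjoint and every
uncountable subset of `E i` is guessed inside `T i`. If it gets stuck at `i`, every uncountable
subset of `P i` is guessed only at points that already guess some `E k`, so fewer than `n - 1`
disjoint subsets of `P i` are guessed there, and we recurse on `n`.

Thinning a set before guessing it forces the guessing point into any given club, so each `T i`
is stationary. Pulling the ladders back along the increasing enumeration `b` of `E i`, at the
closure points of `b`, turns guesses of the sets `b '' A` into a `♣^{inf ≥ a}` sequence on `T i`.
The points of `S` in no `T i` are added to `T 0`.
-/

open Filter Set

noncomputable def omega1 : Ordinal.{0} := (Cardinal.aleph 1).ord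

/-- The set of countable limit ordinals, `Lim(ω₁)`. -/
def limOmega1 : Set Ordinal.{0} := {δ | δ < omega1 ∧ Order.IsSuccLimit δ}

/-- `C` is a closed unbounded subset of `ω₁`. -/
def IsClubIn (C : Set Ordinal.{0}) : Prop :=
  C ⊆ Set.Iio omega1 ∧
  (∀ δ, δ < omega1 → Order.IsSuccLimit δ → (∀ β < δ, ∃ γ ∈ C, β < γ ∧ γ < δ) → δ ∈ C) ∧
  (∀ β, β < omega1 → ∃ γ ∈ C, β < γ)

/-- `S` is a stationary subset of `ω₁`. -/
def IsStatIn (S : Set Ordinal.{0}) : Prop :=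
  S ⊆ Set.Iio omega1 ∧ ∀ C, IsClubIn C → (S ∩ C).Nonempty

open scoped Classical in
/-- `|{k < n : α k ∈ A}| / n` as a real number. -/
noncomputable def hitRatio (α : ℕ → Ordinal.{0}) (A : Set Ordinal.{0}) (n : ℕ) : ℝ :=
  ((Finset.range n).filter (fun k => α k ∈ A)).card / n

/-- `α` assigns to each `δ ∈ S` a strictly increasing sequence cofinal in `δ`. -/
def GoodSeq (S : Set Ordinal.{0}) (α : Ordinal.{0} → ℕ → Ordinal.{0}) : Prop :=
  ∀ δ ∈ S, StrictMono (α δ) ∧ (∀ n, α δ n < δ) ∧ (∀ β < δ, ∃ n, β < α δ n)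

/-- The principle `♣_S^{inf ≥ a}`. -/
def ClubSuitInf (S : Set Ordinal.{0}) (a : ℝ) : Prop :=
  ∃ α : Ordinal.{0} → ℕ → Ordinal.{0}, GoodSeq S α ∧
    ∀ A : Set Ordinal.{0}, A ⊆ Set.Iio omega1 → ¬ A.Countable →
      ∃ δ ∈ S, a ≤ Filter.liminf (hitRatio (α δ) A) Filter.atTop

/-- The principle `♣_S^{sup ≥ a}`. -/
def ClubSuitSup (S : Set Ordinal.{0}) (a : ℝ) : Prop :=
  ∃ α : Ordinal.{0} → ℕ → Ordinal.{0}, GoodSeq S α ∧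
    ∀ A : Set Ordinal.{0}, A ⊆ Set.Iio omega1 → ¬ A.Countable →
      ∃ δ ∈ S, a ≤ Filter.limsup (hitRatio (α δ) A) Filter.atTop

/-- The diamond principle `◊` on `ω₁`. -/
def DiamondOmega1 : Prop :=
  ∃ B : Ordinal.{0} → Set Ordinal.{0}, (∀ δ ∈ limOmega1, B δ ⊆ Set.Iio δ) ∧
    ∀ A : Set Ordinal.{0}, A ⊆ Set.Iio omega1 →
      IsStatIn {δ ∈ limOmega1 | A ∩ Set.Iio δ = B δ}

open Cardinal Function
open scoped Ordinal

theorem omega1_eq_omega_one : omega1 = ω₁ := ord_aleph 1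

theorem isSuccLimit_omega1 : Order.IsSuccLimit omega1 := isSuccLimit_ord (aleph0_le_aleph 1)

theorem countable_Iio_of_lt_omega1 {γ : Ordinal.{0}} (hγ : γ < omega1) : (Iio γ).Countable := by
  rw [← le_aleph0_iff_set_countable, mk_Iio_ordinal, ← lift_aleph0.{1, 0}, Cardinal.lift_le,
    ← lt_aleph_one_iff, ← lt_ord]
  exact hγ

theorem not_countable_Iio_omega1 : ¬(Iio omega1).Countable := by
  rw [← le_aleph0_iff_set_countable, mk_Iio_ordinal, omega1, card_ord, lift_aleph, not_le]
  simp

theorem exists_lt_omega1_of_countable {B : Set Ordinal.{0}} (hB : B ⊆ Iio omega1)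
    (hc : B.Countable) : ∃ η < omega1, B ⊆ Iio η := by
  have := hc.to_subtype
  have hsucc : ∀ x : B, Order.succ x.1 < ω₁ := fun x =>
    omega1_eq_omega_one ▸ isSuccLimit_omega1.succ_lt (hB x.2)
  refine ⟨⨆ x : B, Order.succ x.1, omega1_eq_omega_one ▸ Ordinal.iSup_lt_omega_one hsucc,
    fun x hx => ?_⟩
  exact (Order.lt_succ x).trans_le (Ordinal.le_iSup (fun x : B => Order.succ x.1) ⟨x, hx⟩)

theorem not_countable_iff_forall_exists_gt {B : Set Ordinal.{0}} (hB : B ⊆ Iio omega1) :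
    ¬B.Countable ↔ ∀ β < omega1, ∃ x ∈ B, β < x := by
  refine ⟨fun hu β hβ => ?_, fun hunb hc => ?_⟩
  · by_contra! hle
    exact hu ((countable_Iio_of_lt_omega1 (isSuccLimit_omega1.succ_lt hβ)).mono
      fun x hx => Order.lt_succ_of_le (hle x hx))
  · obtain ⟨η, hη, hBη⟩ := exists_lt_omega1_of_countable hB hc
    obtain ⟨x, hx, hηx⟩ := hunb η hη
    exact (hBη hx).asymm hηx

theorem isClubIn_closurePoints {b : Ordinal.{0} → Ordinal.{0}} (hb : StrictMono b)
    (hbω : ∀ x < omega1, b x < omega1) :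
    IsClubIn {δ | δ < omega1 ∧ ∀ x < δ, b x < δ} := by
  refine ⟨fun δ hδ => hδ.1, fun δ hδ _ hcof => ⟨hδ, fun x hx => ?_⟩, fun β hβ => ?_⟩
  · obtain ⟨γ, hγ, hxγ, hγδ⟩ := hcof x hx
    exact (hγ.2 x hxγ).trans hγδ
  · -- the `ω`-th iterate of `b` above `β` is closed under `b`
    have hcof : ℵ₀ < (omega1).cof := by
      rw [omega1_eq_omega_one, cof_omega_one]; exact aleph0_lt_aleph_one
    refine ⟨Ordinal.nfp b (Order.succ β),
      ⟨Ordinal.nfp_lt_ord hcof hbω (isSuccLimit_omega1.succ_lt hβ), fun x hx => ?_⟩,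
      (Order.lt_succ β).trans_le (Ordinal.le_nfp _ _)⟩
    obtain ⟨n, hn⟩ := Ordinal.lt_nfp_iff.1 hx
    calc b x < b (b^[n] (Order.succ β)) := hb hn
      _ = b^[n + 1] (Order.succ β) := (iterate_succ_apply' _ _ _).symm
      _ ≤ _ := Ordinal.iterate_le_nfp _ _ _

/-- Keep the elements of `B` that come first after some point of `C`: between any two of them
lies a point of `C`. -/
theorem IsClubIn.exists_subset_limits_mem {C B : Set Ordinal.{0}} (hC : IsClubIn C)
    (hB : B ⊆ Iio omega1) (hBu : ¬B.Countable) :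
    ∃ X ⊆ B, ¬X.Countable ∧ ∀ δ < omega1, Order.IsSuccLimit δ →
      (∀ β < δ, ∃ x ∈ X, β < x ∧ x < δ) → δ ∈ C := by
  set X := {e | ∃ c ∈ C, IsLeast {x ∈ B | c < x} e}
  have hXB : X ⊆ B := fun e ⟨_, _, he⟩ => he.1.1
  have hsep : ∀ x ∈ X, ∀ y ∈ X, x < y → ∃ c ∈ C, x ≤ c ∧ c < y := by
    rintro x hx y ⟨c, hc, hy⟩ hxy
    exact ⟨c, hc, not_lt.1 fun hcx => (hy.2 ⟨hXB hx, hcx⟩).not_gt hxy, hy.1.2⟩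
  refine ⟨X, hXB, (not_countable_iff_forall_exists_gt (hXB.trans hB)).2 fun β hβ => ?_,
    fun δ hδ hlim hcof => hC.2.1 δ hδ hlim fun β hβ => ?_⟩
  · obtain ⟨c, hc, hβc⟩ := hC.2.2 β hβ
    obtain ⟨x, hx, hcx⟩ := (not_countable_iff_forall_exists_gt hB).1 hBu c (hC.1 hc)
    have hleast := isLeast_csInf (s := {x ∈ B | c < x}) ⟨x, hx, hcx⟩
    exact ⟨_, ⟨c, hc, hleast⟩, hβc.trans hleast.1.2⟩
  · obtain ⟨x, hx, hβx, hxδ⟩ := hcof β hβ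
    obtain ⟨y, hy, hxy, hyδ⟩ := hcof x hxδ
    obtain ⟨c, hc, hxc, hcy⟩ := hsep x hx y hy hxy
    exact ⟨c, hc, hβx.trans_le hxc, hcy.trans hyδ⟩

theorem exists_strictMono_mapsTo {E : Set Ordinal.{0}} (hE : E ⊆ Iio omega1) (hEu : ¬E.Countable) :
    ∃ b : Ordinal.{0} → Ordinal.{0}, StrictMono b ∧ MapsTo b (Iio omega1) E := by
  have hunb : ¬BddAbove (E ∪ Ici omega1) := fun ⟨m, hm⟩ =>
    (Order.lt_succ (max omega1 m)).not_ge
      ((hm (Or.inr (le_max_left omega1 m |>.trans (Order.le_succ _)))).trans (le_max_right _ _))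
  refine ⟨Ordinal.enumOrd _, Ordinal.enumOrd_strictMono hunb, fun x hx => ?_⟩
  refine (Ordinal.enumOrd_mem hunb x).resolve_right fun hωx => hEu ?_
  -- otherwise `E` would be enumerated below `x`
  refine ((countable_Iio_of_lt_omega1 hx).image (Ordinal.enumOrd (E ∪ Ici omega1))).mono
    fun e he => ?_
  obtain ⟨y, rfl⟩ := Ordinal.enumOrd_surjective hunb (Or.inl he)
  exact ⟨y, (Ordinal.enumOrd_lt_enumOrd hunb).1 ((hE he).trans_le hωx), rfl⟩

theorem exists_pairwiseDisjoint_not_countable {H : Set Ordinal.{0}} (hHu : ¬H.Countable) :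
    ∃ P : Ordinal.{0} → Set Ordinal.{0}, (Iio omega1).PairwiseDisjoint P ∧
      ∀ i < omega1, P i ⊆ H ∧ ¬(P i).Countable := by
  have hmk : #(Iio omega1) = ℵ₁ := by
    rw [mk_Iio_ordinal, omega1, card_ord, lift_aleph, Ordinal.lift_one]
  obtain ⟨e⟩ : Nonempty (Iio omega1 × Iio omega1 ↪ H) := by
    rw [← Cardinal.le_def, mk_prod, Cardinal.lift_id, hmk, mul_eq_self (aleph0_le_aleph 1),
      aleph_one_le_iff]
    exact lt_of_not_ge ((le_aleph0_iff_set_countable).not.2 hHu)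
  refine ⟨fun i => {y | ∃ p : Iio omega1 × Iio omega1, p.1.1 = i ∧ (e p).1 = y}, ?_,
    fun i hi => ⟨?_, ?_⟩⟩
  · rintro i - j - hij
    refine Set.disjoint_left.2 ?_
    rintro y ⟨p, rfl, rfl⟩ ⟨q, hq, hpq⟩
    exact hij (hq ▸ congrArg (·.1.1) (e.injective (Subtype.ext hpq.symm)))
  · rintro y ⟨p, -, rfl⟩
    exact (e p).2
  · intro hc
    set g : Iio omega1 → Ordinal.{0} := fun x => e (⟨i, hi⟩, x)
    have hg : Injective g := fun x y hxy =>
      (Prod.ext_iff.1 (e.injective (Subtype.ext hxy))).2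
    have hgc : (g '' univ).Countable := hc.mono (by rintro _ ⟨x, -, rfl⟩; exact ⟨_, rfl, rfl⟩)
    exact not_countable_Iio_omega1 (countable_coe_iff.1 (countable_univ_iff.1
      (countable_of_injective_of_countable_image hg.injOn hgc)))

noncomputable def lowerDensity (f : ℕ → Ordinal.{0}) (A : Set Ordinal.{0}) : ℝ :=
  liminf (hitRatio f A) atTop

section Density

variable {f : ℕ → Ordinal.{0}} {A B : Set Ordinal.{0}}

theorem hitRatio_nonneg (f : ℕ → Ordinal.{0}) (A : Set Ordinal.{0}) (n : ℕ) :
    0 ≤ hitRatio f A n := by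
  unfold hitRatio; positivity

theorem hitRatio_le_one (f : ℕ → Ordinal.{0}) (A : Set Ordinal.{0}) (n : ℕ) :
    hitRatio f A n ≤ 1 := by
  classical
  unfold hitRatio
  exact div_le_one_of_le₀ (by exact_mod_cast (Finset.card_filter_le _ _).trans (by simp))
    n.cast_nonneg

theorem isBoundedUnder_ge_hitRatio (f : ℕ → Ordinal.{0}) (A : Set Ordinal.{0}) :
    IsBoundedUnder (· ≥ ·) atTop (hitRatio f A) :=
  isBoundedUnder_of ⟨0, hitRatio_nonneg f A⟩

theorem isCoboundedUnder_ge_hitRatio (f : ℕ → Ordinal.{0}) (A : Set Ordinal.{0}) :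
    IsCoboundedUnder (· ≥ ·) atTop (hitRatio f A) :=
  (isBoundedUnder_of ⟨1, hitRatio_le_one f A⟩).isCoboundedUnder_ge

theorem hitRatio_mono (f : ℕ → Ordinal.{0}) (h : A ⊆ B) (n : ℕ) :
    hitRatio f A n ≤ hitRatio f B n := by
  classical
  unfold hitRatio
  gcongr

theorem hitRatio_congr {g : ℕ → Ordinal.{0}} (h : ∀ k, f k ∈ A ↔ g k ∈ B) :
    hitRatio f A = hitRatio g B := by
  classical
  ext n
  unfold hitRatio
  simp only [h]

theorem lowerDensity_mono (f : ℕ → Ordinal.{0}) (h : A ⊆ B) :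
    lowerDensity f A ≤ lowerDensity f B :=
  liminf_le_liminf (.of_forall (hitRatio_mono f h)) (isBoundedUnder_ge_hitRatio f A)
    (isCoboundedUnder_ge_hitRatio f B)

theorem infinite_setOf_mem_of_lowerDensity_pos (h : 0 < lowerDensity f A) :
    {n | f n ∈ A}.Infinite := by
  classical
  by_contra hfin
  obtain ⟨N, hN⟩ := (not_infinite.1 hfin).bddAbove
  -- past `N` the numerator of the ratio is constant
  have heq : hitRatio f A =ᶠ[atTop] fun n =>
      ((Finset.range (N + 1)).filter (fun k => f k ∈ A)).card / (n : ℝ) := by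
    filter_upwards [eventually_ge_atTop (N + 1)] with n hn
    unfold hitRatio
    congr 3
    ext k
    simp only [Finset.mem_filter, Finset.mem_range]
    exact ⟨fun hk => ⟨Nat.lt_succ_of_le (hN hk.2), hk.2⟩,
      fun hk => ⟨hk.1.trans_le hn, hk.2⟩⟩
  have : lowerDensity f A = 0 :=
    ((tendsto_const_div_atTop_nhds_zero_nat _).congr' heq.symm).liminf_eq
  exact h.ne' this

theorem sum_hitRatio_le_one {ι : Type*} [Fintype ι] (f : ℕ → Ordinal.{0}) {B : ι → Set Ordinal.{0}}
    (hB : Pairwise (Disjoint on B)) (m : ℕ) : ∑ j, hitRatio f (B j) m ≤ 1 := by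
  classical
  unfold hitRatio
  rw [← Finset.sum_div, ← Nat.cast_sum, ← Finset.card_biUnion]
  · exact div_le_one_of_le₀ (by exact_mod_cast (Finset.card_le_card (Finset.biUnion_subset.2
      fun j _ => Finset.filter_subset _ _)).trans (by simp)) m.cast_nonneg
  · intro i _ j _ hij
    exact Finset.disjoint_filter_filter' _ _ fun p hpi hpj k hk =>
      Set.disjoint_left.1 (hB hij) (hpi k hk) (hpj k hk)

theorem exists_lowerDensity_lt_of_pairwise_disjoint {n : ℕ} {a : ℝ} (f : ℕ → Ordinal.{0})
    {B : Fin n → Set Ordinal.{0}} (hB : Pairwise (Disjoint on B)) (hna : 1 < n * a) :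
    ∃ j, lowerDensity f (B j) < a := by
  by_contra! h
  have hn : (0 : ℝ) < n := Nat.cast_pos.2 (Nat.pos_of_ne_zero (by rintro rfl; norm_num at hna))
  have hlt : (n : ℝ)⁻¹ < a := by rwa [inv_lt_iff_one_lt_mul₀' hn]
  obtain ⟨m, hm⟩ := (eventually_all.2 fun j => eventually_lt_of_lt_liminf
    (hlt.trans_le (h j)) (isBoundedUnder_ge_hitRatio f (B j))).exists
  have : (1 : ℝ) < ∑ j, hitRatio f (B j) m :=
    calc (1 : ℝ) = ∑ _j : Fin n, (n : ℝ)⁻¹ := by simp [hn.ne']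
      _ < _ := Finset.sum_lt_sum_of_nonempty
        (Finset.univ_nonempty_iff.2 ⟨⟨0, by exact_mod_cast hn⟩⟩) fun j _ => hm j
  exact this.not_ge (sum_hitRatio_le_one f hB m)

theorem hitRatio_le_hitRatio_comp_nth {p : ℕ → Prop} (hp : {m | p m}.Infinite)
    (hA : ∀ m, f m ∈ A → p m) {n : ℕ} (hn : 0 < n) :
    hitRatio f A (Nat.nth p n) ≤ hitRatio (f ∘ Nat.nth p) A n := by
  classical
  unfold hitRatio
  have hcard : ((Finset.range (Nat.nth p n)).filter fun j => f j ∈ A).card ≤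
      ((Finset.range n).filter fun k => (f ∘ Nat.nth p) k ∈ A).card := by
    refine (Finset.card_le_card fun j hj => ?_).trans (Finset.card_image_le (f := Nat.nth p))
    obtain ⟨hj, hjA⟩ := Finset.mem_filter.1 hj
    have hpj := hA j hjA
    refine Finset.mem_image.2 ⟨Nat.count p j, Finset.mem_filter.2 ⟨?_, ?_⟩, Nat.nth_count hpj⟩
    · simpa [Nat.count_nth_of_infinite hp] using
        Nat.count_strict_mono hpj (Finset.mem_range.1 hj)
    · rwa [comp_apply, Nat.nth_count hpj]
  calc _ ≤ (((Finset.range n).filter fun k => (f ∘ Nat.nth p) k ∈ A).card : ℝ) / Nat.nth p n := by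
        gcongr
    _ ≤ _ := by
        gcongr
        exact (Nat.nth_strictMono hp).le_apply

theorem lowerDensity_le_lowerDensity_comp_nth {p : ℕ → Prop}
    (hp : {m | p m}.Infinite) (hA : ∀ m, f m ∈ A → p m) :
    lowerDensity f A ≤ lowerDensity (f ∘ Nat.nth p) A :=
  calc lowerDensity f A ≤ liminf (hitRatio f A ∘ Nat.nth p) atTop :=
        (Nat.nth_strictMono hp).tendsto_atTop.liminf_le_liminf_comp
          (isBoundedUnder_of ⟨1, fun _ => hitRatio_le_one f A _⟩).isCoboundedUnder_ge
          (isBoundedUnder_ge_hitRatio f A)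
    _ ≤ _ := liminf_le_liminf ((eventually_gt_atTop 0).mono fun _ hn =>
        hitRatio_le_hitRatio_comp_nth hp hA hn)
        (isBoundedUnder_of ⟨0, fun _ => hitRatio_nonneg f A _⟩)
        (isCoboundedUnder_ge_hitRatio _ A)

end Density

def IsLadder (δ : Ordinal.{0}) (s : ℕ → Ordinal.{0}) : Prop :=
  StrictMono s ∧ (∀ n, s n < δ) ∧ ∀ β < δ, ∃ n, β < s n

theorem GoodSeq.isLadder {S : Set Ordinal.{0}} {α : Ordinal.{0} → ℕ → Ordinal.{0}}
    (h : GoodSeq S α) {δ : Ordinal.{0}} (hδ : δ ∈ S) : IsLadder δ (α δ) :=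
  h δ hδ

theorem IsLadder.exists_mem_between {δ : Ordinal.{0}} {s : ℕ → Ordinal.{0}} (h : IsLadder δ s)
    {X : Set Ordinal.{0}} (hX : {n | s n ∈ X}.Infinite) :
    ∀ β < δ, ∃ x ∈ X, β < x ∧ x < δ := by
  intro β hβ
  obtain ⟨n₀, hn₀⟩ := h.2.2 β hβ
  obtain ⟨n, hn, hn₀n⟩ := hX.exists_gt n₀
  exact ⟨s n, hn, hn₀.trans (h.1 hn₀n), h.2.1 n⟩

noncomputable def pullbackSeq (b : Ordinal.{0} → Ordinal.{0}) (f : ℕ → Ordinal.{0}) :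
    ℕ → Ordinal.{0} :=
  invFun b ∘ f ∘ Nat.nth (fun m => f m ∈ range b)

section Pullback

variable {b : Ordinal.{0} → Ordinal.{0}} {f : ℕ → Ordinal.{0}}

theorem apply_pullbackSeq (hf : {m | f m ∈ range b}.Infinite) (n : ℕ) :
    b (pullbackSeq b f n) = f (Nat.nth (fun m => f m ∈ range b) n) :=
  invFun_eq (Nat.nth_mem_of_infinite hf n)

theorem lowerDensity_image_le_pullbackSeq (hb : Injective b) (hf : {m | f m ∈ range b}.Infinite)
    (A : Set Ordinal.{0}) : lowerDensity f (b '' A) ≤ lowerDensity (pullbackSeq b f) A := by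
  refine (lowerDensity_le_lowerDensity_comp_nth hf fun m hm => image_subset_range b A hm).trans
    (le_of_eq ?_)
  unfold lowerDensity
  rw [hitRatio_congr fun k => ?_]
  rw [comp_apply, ← apply_pullbackSeq hf, hb.mem_set_image]

theorem isLadder_pullbackSeq {δ : Ordinal.{0}} (h : IsLadder δ f) (hb : StrictMono b)
    (hδ : ∀ x < δ, b x < δ) (hf : {m | f m ∈ range b}.Infinite) :
    IsLadder δ (pullbackSeq b f) := by
  classical
  have hmono : StrictMono fun n => b (pullbackSeq b f n) := by
    simp only [apply_pullbackSeq hf]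
    exact h.1.comp (Nat.nth_strictMono hf)
  refine ⟨fun m n hmn => hb.lt_iff_lt.1 (hmono hmn), fun n => ?_, fun β hβ => ?_⟩
  · exact hb.le_apply.trans_lt ((apply_pullbackSeq hf n).symm ▸ h.2.1 _)
  · obtain ⟨m₀, hm₀⟩ := h.2.2 (b β) (hδ β hβ)
    obtain ⟨m, hm, hm₀m⟩ := hf.exists_gt m₀
    refine ⟨Nat.count (fun m => f m ∈ range b) m, hb.lt_iff_lt.1 ?_⟩
    rw [apply_pullbackSeq hf, Nat.nth_count (p := fun m => f m ∈ range b) hm]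
    exact hm₀.trans (h.1 hm₀m)

end Pullback

theorem pairwise_disjoint_fin_cons {α : Type*} {n : ℕ} {D : Set α} {B : Fin n → Set α}
    (hB : Pairwise (Disjoint on B)) (hD : ∀ j, Disjoint D (B j)) :
    Pairwise (Disjoint on (Fin.cons D B : Fin (n + 1) → Set α)) := by
  intro i j hij
  cases i using Fin.cases <;> cases j using Fin.cases
  · exact absurd rfl hij
  · exact hD _
  · exact (hD _).symm
  · exact hB fun h => hij (congrArg Fin.succ h)

section Greedy

variable {σ : Type*} (G : σ → Set Ordinal.{0} → Prop)

def GuessesUncountable (W : Set σ) (H : Set Ordinal.{0}) : Prop :=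
  ∀ B ⊆ H, ¬B.Countable → ∃ δ ∈ W, G δ B

def GuessesFewerThan (W : Set σ) (H : Set Ordinal.{0}) (n : ℕ) : Prop :=
  ∀ δ ∈ W, ∀ B : Fin n → Set Ordinal.{0}, (∀ j, B j ⊆ H) → Pairwise (Disjoint on B) →
    ∃ j, ¬G δ (B j)

def HasGuessingPieces (W : Set σ) (H : Set Ordinal.{0}) : Prop :=
  ∃ (T : Ordinal.{0} → Set σ) (E : Ordinal.{0} → Set Ordinal.{0}),
    (Iio omega1).PairwiseDisjoint T ∧
      ∀ i < omega1, T i ⊆ W ∧ E i ⊆ H ∧ ¬(E i).Countable ∧ GuessesUncountable G (T i) (E i)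

open scoped Classical in
noncomputable def greedyPieces (W : Set σ) (P : Ordinal.{0} → Set Ordinal.{0}) :
    Ordinal.{0} → Set Ordinal.{0} :=
  Ordinal.lt_wf.fix fun i E =>
    if h : ∃ B ⊆ P i, ¬B.Countable ∧ ∀ δ ∈ W, ∀ k (hk : k < i), G δ (E k hk) → ¬G δ B
    then h.choose else ∅

variable {G} {W : Set σ} {P : Ordinal.{0} → Set Ordinal.{0}}

open scoped Classical in
theorem greedyPieces_eq (i : Ordinal.{0}) : greedyPieces G W P i =
    if h : ∃ B ⊆ P i, ¬B.Countable ∧ ∀ δ ∈ W, ∀ k < i, G δ (greedyPieces G W P k) → ¬G δ B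
    then h.choose else ∅ := by
  rw [greedyPieces, Ordinal.lt_wf.fix_eq]

theorem greedyPieces_subset (i : Ordinal.{0}) : greedyPieces G W P i ⊆ P i := by
  rw [greedyPieces_eq]
  split_ifs with h
  exacts [h.choose_spec.1, empty_subset _]

theorem greedyPieces_spec {i : Ordinal.{0}}
    (h : ∃ B ⊆ P i, ¬B.Countable ∧ ∀ δ ∈ W, ∀ k < i, G δ (greedyPieces G W P k) → ¬G δ B) :
    ¬(greedyPieces G W P i).Countable ∧
      ∀ δ ∈ W, ∀ k < i, G δ (greedyPieces G W P k) → ¬G δ (greedyPieces G W P i) := by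
  rw [greedyPieces_eq, dif_pos h]
  exact h.choose_spec.2

theorem GuessesFewerThan.of_succ {H H' : Set Ordinal.{0}} {n : ℕ}
    (h : GuessesFewerThan G W H (n + 1)) (hH' : H' ⊆ H) {W' : Set σ}
    (hW' : ∀ δ ∈ W', δ ∈ W ∧ ∃ D ⊆ H, Disjoint D H' ∧ G δ D) : GuessesFewerThan G W' H' n := by
  intro δ hδ B hBH hB
  obtain ⟨hδW, D, hDH, hDH', hGD⟩ := hW' δ hδ
  obtain ⟨j, hj⟩ := h δ hδW (Fin.cons D B) (Fin.cases hDH fun j => (hBH j).trans hH')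
    (pairwise_disjoint_fin_cons hB fun j => hDH'.mono_right (hBH j))
  cases j using Fin.cases
  · exact absurd hGD hj
  · exact ⟨_, hj⟩

theorem HasGuessingPieces.mono {W' : Set σ} {H H' : Set Ordinal.{0}}
    (h : HasGuessingPieces G W' H') (hW : W' ⊆ W) (hH : H' ⊆ H) : HasGuessingPieces G W H :=
  let ⟨T, E, hdisj, hT⟩ := h
  ⟨T, E, hdisj, fun i hi => ⟨(hT i hi).1.trans hW, (hT i hi).2.1.trans hH, (hT i hi).2.2⟩⟩

theorem hasGuessingPieces_of_greedyPieces (hG : ∀ δ, Monotone (G δ)) {H : Set Ordinal.{0}}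
    (hcov : GuessesUncountable G W H) (hPH : ∀ i < omega1, P i ⊆ H)
    (hall : ∀ i < omega1,
      ∃ B ⊆ P i, ¬B.Countable ∧ ∀ δ ∈ W, ∀ k < i, G δ (greedyPieces G W P k) → ¬G δ B) :
    HasGuessingPieces G W H := by
  set E := greedyPieces G W P
  refine ⟨fun i => {δ ∈ W | G δ (E i)}, E, fun i hi j hj hij => ?_, fun i hi => ?_⟩
  · refine Set.disjoint_left.2 fun δ ⟨hδW, hδi⟩ ⟨_, hδj⟩ => ?_
    rcases lt_or_gt_of_ne hij with hij | hji
    · exact (greedyPieces_spec (hall j hj)).2 δ hδW i hij hδi hδj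
    · exact (greedyPieces_spec (hall i hi)).2 δ hδW j hji hδj hδi
  · have hEH : E i ⊆ H := (greedyPieces_subset i).trans (hPH i hi)
    refine ⟨sep_subset _ _, hEH, (greedyPieces_spec (hall i hi)).1, fun B hB hBu => ?_⟩
    obtain ⟨δ, hδW, hδB⟩ := hcov B (hB.trans hEH) hBu
    exact ⟨δ, ⟨hδW, hG δ hB hδB⟩, hδB⟩

theorem GuessesUncountable.hasGuessingPieces (hG : ∀ δ, Monotone (G δ)) {n : ℕ} :
    ∀ {W : Set σ} {H : Set Ordinal.{0}}, ¬H.Countable → GuessesUncountable G W H →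
      GuessesFewerThan G W H n → HasGuessingPieces G W H := by
  induction n with
  | zero =>
    intro W H hHu hcov hfew
    obtain ⟨δ, hδ, -⟩ := hcov H subset_rfl hHu
    obtain ⟨j, -⟩ := hfew δ hδ Fin.elim0 (fun j => j.elim0) fun j => j.elim0
    exact j.elim0
  | succ n ih =>
    intro W H hHu hcov hfew
    obtain ⟨P, hPdisj, hP⟩ := exists_pairwiseDisjoint_not_countable hHu
    by_cases hall : ∀ i < omega1, ∃ B ⊆ P i, ¬B.Countable ∧
        ∀ δ ∈ W, ∀ k < i, G δ (greedyPieces G W P k) → ¬G δ B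
    · exact hasGuessingPieces_of_greedyPieces hG hcov (fun i hi => (hP i hi).1) hall
    -- stuck at `i`: subsets of `P i` are only guessed where an earlier piece already is
    push Not at hall
    obtain ⟨i, hi, hstuck⟩ := hall
    set E := greedyPieces G W P
    refine (ih (W := {δ ∈ W | ∃ k < i, G δ (E k)}) (hP i hi).2 (fun B hB hBu => ?_)
      (hfew.of_succ (hP i hi).1 fun δ ⟨hδW, k, hki, hk⟩ => ?_)).mono (sep_subset _ _) (hP i hi).1
    · obtain ⟨δ, hδW, k, hki, hk, hδB⟩ := hstuck B hB hBu
      exact ⟨δ, ⟨hδW, k, hki, hk⟩, hδB⟩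
    · exact ⟨hδW, E k, (greedyPieces_subset k).trans (hP k (hki.trans hi)).1,
        (hPdisj (hki.trans hi) hi hki.ne).mono_left (greedyPieces_subset k), hk⟩

end Greedy

theorem Set.PairwiseDisjoint.exists_cover {ι α : Type*} {I : Set ι} {S : Set α} {T : ι → Set α}
    (hd : I.PairwiseDisjoint T) (hT : ∀ i ∈ I, T i ⊆ S) {i₀ : ι} (hi₀ : i₀ ∈ I) :
    ∃ T' : ι → Set α, I.PairwiseDisjoint T' ∧ ⋃ i ∈ I, T' i = S ∧
      ∀ i ∈ I, T i ⊆ T' i ∧ T' i ⊆ S := by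
  set R := S \ ⋃ i ∈ I, T i
  have hR : ∀ i ∈ I, Disjoint (T i) R := fun i hi =>
    disjoint_sdiff_right.mono_left (subset_biUnion_of_mem (u := T) hi)
  refine ⟨fun i => T i ∪ {x | i = i₀ ∧ x ∈ R}, fun i hi j hj hij => ?_, ?_,
    fun i hi => ⟨subset_union_left, union_subset (hT i hi) fun x hx => hx.2.1⟩⟩
  · refine disjoint_union_left.2 ⟨disjoint_union_right.2 ⟨hd hi hj hij,
      (hR i hi).mono_right fun x hx => hx.2⟩, disjoint_union_right.2 ⟨
      ((hR j hj).mono_right fun x hx => hx.2).symm, ?_⟩⟩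
    exact Set.disjoint_left.2 fun x hx hx' => hij (hx.1.trans hx'.1.symm)
  · refine (iUnion₂_subset fun i hi => union_subset (hT i hi) fun x hx => hx.2.1).antisymm
      fun x hx => ?_
    by_cases hxT : x ∈ ⋃ i ∈ I, T i
    · obtain ⟨i, hi, hxi⟩ := mem_iUnion₂.1 hxT
      exact mem_biUnion hi (Or.inl hxi)
    · exact mem_biUnion hi₀ (Or.inr ⟨rfl, hx, hxT⟩)

def Guesses (a : ℝ) (α : Ordinal.{0} → ℕ → Ordinal.{0}) (δ : Ordinal.{0}) (B : Set Ordinal.{0}) :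
    Prop :=
  a ≤ lowerDensity (α δ) B

section Guessing

variable {a : ℝ} {α : Ordinal.{0} → ℕ → Ordinal.{0}}

theorem monotone_guesses (δ : Ordinal.{0}) : Monotone (Guesses a α δ) :=
  fun _ _ hAB h => h.trans (lowerDensity_mono _ hAB)

theorem guessesFewerThan_guesses (ha : 0 < a) (W H : Set Ordinal.{0}) :
    GuessesFewerThan (Guesses a α) W H (⌊1 / a⌋₊ + 1) := by
  intro δ _ B _ hB
  have hna : 1 < ((⌊1 / a⌋₊ + 1 : ℕ) : ℝ) * a := by
    push_cast
    exact (div_lt_iff₀ ha).1 (Nat.lt_floor_add_one _)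
  obtain ⟨j, hj⟩ := exists_lowerDensity_lt_of_pairwise_disjoint (α δ) hB hna
  exact ⟨j, hj.not_ge⟩

theorem GuessesUncountable.exists_mem_club (ha : 0 < a) {W H : Set Ordinal.{0}}
    (hα : GoodSeq W α) (hW : W ⊆ limOmega1)
    (hG : GuessesUncountable (Guesses a α) W H) {B : Set Ordinal.{0}}
    (hBH : B ⊆ H) (hB : B ⊆ Iio omega1) (hBu : ¬B.Countable) {C : Set Ordinal.{0}}
    (hC : IsClubIn C) : ∃ δ ∈ W, δ ∈ C ∧ a ≤ lowerDensity (α δ) B := by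
  obtain ⟨X, hXB, hXu, hXC⟩ := hC.exists_subset_limits_mem hB hBu
  obtain ⟨δ, hδ, hδX⟩ := hG X (hXB.trans hBH) hXu
  exact ⟨δ, hδ, hXC δ (hW hδ).1 (hW hδ).2 ((hα.isLadder hδ).exists_mem_between
    (infinite_setOf_mem_of_lowerDensity_pos (ha.trans_le hδX))),
    monotone_guesses δ hXB hδX⟩

theorem clubSuitInf_of_guesses_image (ha : 0 < a) {T : Set Ordinal.{0}} (hα : GoodSeq T α)
    {b : Ordinal.{0} → Ordinal.{0}} (hb : StrictMono b)
    (hguess : ∀ A ⊆ Iio omega1, ¬A.Countable →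
      ∃ δ ∈ T, (∀ x < δ, b x < δ) ∧ a ≤ lowerDensity (α δ) (b '' A)) :
    ClubSuitInf T a := by
  classical
  refine ⟨fun δ => if {m | α δ m ∈ range b}.Infinite ∧ ∀ x < δ, b x < δ
    then pullbackSeq b (α δ) else α δ, fun δ hδ => ?_, fun A hA hAu => ?_⟩
  · dsimp only
    split_ifs with h
    exacts [isLadder_pullbackSeq (hα.isLadder hδ) hb h.2 h.1, hα δ hδ]
  · obtain ⟨δ, hδ, hcl, hδA⟩ := hguess A hA hAu
    have hinf : {m | α δ m ∈ range b}.Infinite :=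
      (infinite_setOf_mem_of_lowerDensity_pos (ha.trans_le hδA)).mono
        fun m hm => image_subset_range b A hm
    refine ⟨δ, hδ, ?_⟩
    dsimp only
    rw [if_pos ⟨hinf, hcl⟩]
    exact hδA.trans (lowerDensity_image_le_pullbackSeq hb.injective hinf A)

theorem isStatIn_and_clubSuitInf_of_guessesUncountable (ha : 0 < a) {T T' E : Set Ordinal.{0}}
    (hα : GoodSeq T' α) (hT' : T' ⊆ limOmega1) (hTT' : T ⊆ T') (hE : E ⊆ Iio omega1)
    (hEu : ¬E.Countable) (hG : GuessesUncountable (Guesses a α) T E) :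
    IsStatIn T' ∧ ClubSuitInf T' a := by
  have hαT : GoodSeq T α := fun δ hδ => hα δ (hTT' hδ)
  obtain ⟨b, hb, hbE⟩ := exists_strictMono_mapsTo hE hEu
  refine ⟨⟨fun δ hδ => (hT' hδ).1, fun C hC => ?_⟩,
    clubSuitInf_of_guesses_image ha hα hb fun A hA hAu => ?_⟩
  · obtain ⟨δ, hδ, hδC, -⟩ := hG.exists_mem_club ha hαT (hTT'.trans hT') subset_rfl hE hEu hC
    exact ⟨δ, hTT' hδ, hδC⟩
  · have hAE : b '' A ⊆ E := image_subset_iff.2 fun x hx => hbE (hA hx)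
    obtain ⟨δ, hδ, hδC, hδA⟩ := hG.exists_mem_club ha hαT (hTT'.trans hT') hAE (hAE.trans hE)
      (fun hc => hAu (countable_of_injective_of_countable_image hb.injective.injOn hc))
      (isClubIn_closurePoints hb fun x hx => hE (hbE hx))
    exact ⟨δ, hTT' hδ, hδC.2, hδA⟩

end Guessing

theorem clubSuitInf_partition_general (a : ℝ) (ha0 : 0 < a)
    (S : Set Ordinal.{0}) (hS : S ⊆ limOmega1)
    (h : ClubSuitInf S a) :
    ∃ T : Ordinal.{0} → Set Ordinal.{0},
      (∀ i, i < omega1 → ∀ j, j < omega1 → i ≠ j → Disjoint (T i) (T j)) ∧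
      (⋃ i ∈ Set.Iio omega1, T i) = S ∧
      ∀ i, i < omega1 → IsStatIn (T i) ∧ ClubSuitInf (T i) a := by
  obtain ⟨α, hα, hguess⟩ := h
  have hcov : GuessesUncountable (Guesses a α) S (Iio omega1) := hguess
  obtain ⟨T, E, hTdisj, hTE⟩ :=
    hcov.hasGuessingPieces monotone_guesses not_countable_Iio_omega1
      (guessesFewerThan_guesses ha0 S _)
  obtain ⟨T', hT'disj, hT'S, hTT'⟩ :=
    hTdisj.exists_cover (fun i hi => (hTE i hi).1) (mem_Iio.2 isSuccLimit_omega1.bot_lt)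
  refine ⟨T', fun i hi j hj hij => hT'disj hi hj hij, hT'S, fun i hi => ?_⟩
  obtain ⟨-, hEω, hEu, hG⟩ := hTE i hi
  exact isStatIn_and_clubSuitInf_of_guessesUncountable ha0 (fun δ hδ => hα δ ((hTT' i hi).2 hδ))
    ((hTT' i hi).2.trans hS) (hTT' i hi).1 hEω hEu hG

/-- Lemma 6.3: if `♣_S^{inf ≥ a}` holds for a stationary `S ⊆ Lim(ω₁)`, then `S`
can be partitioned into `ω₁` many pairwise disjoint stationary sets `⟨S_i : i < ω₁⟩`
such that `♣_{S_i}^{inf ≥ a}` holds for each `i < ω₁`. -/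
theorem clubSuitInf_partition (a : ℝ) (ha0 : 0 < a) (ha1 : a ≤ 1)
    (S : Set Ordinal.{0}) (hS : S ⊆ limOmega1) (hstat : IsStatIn S)
    (h : ClubSuitInf S a) :
    ∃ T : Ordinal.{0} → Set Ordinal.{0},
      (∀ i, i < omega1 → ∀ j, j < omega1 → i ≠ j → Disjoint (T i) (T j)) ∧
      (⋃ i ∈ Set.Iio omega1, T i) = S ∧
      ∀ i, i < omega1 → IsStatIn (T i) ∧ ClubSuitInf (T i) a :=
  clubSuitInf_partition_general a ha0 S hS h
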